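/- arXiv:2011.12981 — 5 statements merged into one kernel-verified Lean document; each statement's English description precedes it below -/
import Mathlib

section
/- Let 0 < a < 1, 0 < b < 1 and P̂1 > 0. Then for every x > 0 the quadratic (a²b − a)·x² + 2a(b−1)·x + (b−1)(1+P̂1) is strictly negative, and consequently the function x ↦ μ1(a,b,P̂1,x) = ((bP̂1+1)(x − b − a·b·x + 1))/(b·x·(P̂1 + a·x + 1)) is strictly decreasing on (0, ∞). -/
/-- For 0<a<1, 0<b<1 and P̂₁>0, the quadratic (a²b−a)x² + 2a(b−1)x + (b−1)(1+P̂₁)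
is strictly negative on (0,∞), and consequently
x ↦ μ₁(a,b,P̂₁,x) = ((bP̂₁+1)(x − b − abx + 1))/(bx(P̂₁ + ax + 1)) is strictly
decreasing on (0,∞). -/
theorem stmt2 (a b P1 : ℝ) (ha : 0 < a) (ha1 : a < 1) (hb : 0 < b) (hb1 : b < 1)
    (hP1 : 0 < P1) :
    (∀ x : ℝ, 0 < x →
      (a ^ 2 * b - a) * x ^ 2 + 2 * a * (b - 1) * x + (b - 1) * (1 + P1) < 0) ∧
    StrictAntiOn
      (fun x : ℝ => ((b * P1 + 1) * (x - b - a * b * x + 1)) / (b * x * (P1 + a * x + 1)))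
      (Set.Ioi 0) := by
  constructor
  · intro x hx
    have h1 : a ^ 2 * b - a < 0 := by nlinarith
    nlinarith [sq_nonneg x, mul_pos hx hx, mul_pos ha hx]
  · intro x hx y hy hxy
    simp only [Set.mem_Ioi] at hx hy
    have hdx : 0 < b * x * (P1 + a * x + 1) := by positivity
    have hdy : 0 < b * y * (P1 + a * y + 1) := by positivity
    simp only []
    rw [div_lt_div_iff₀ hdy hdx]
    have hyx : 0 < y - x := sub_pos.mpr hxy
    have hab : 0 < 1 - a * b := by nlinarith
    have key : (b * P1 + 1) * (y - b - a * b * y + 1) * (b * x * (P1 + a * x + 1))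
        - (b * P1 + 1) * (x - b - a * b * x + 1) * (b * y * (P1 + a * y + 1))
        = -((b * P1 + 1) * b * (y - x) *
            (a * (1 - a * b) * (x * y) + (1 - b) * (P1 + 1) + a * (1 - b) * (x + y))) := by
      ring
    nlinarith [mul_pos (mul_pos (mul_pos (by positivity : (0:ℝ) < b * P1 + 1) hb) hyx)
      (by nlinarith [mul_pos (mul_pos ha hab) (mul_pos hx hy), mul_pos (mul_pos ha (by linarith : (0:ℝ) < 1 - b)) (by linarith : (0:ℝ) < x + y), mul_pos (by linarith : (0:ℝ) < 1 - b) (by linarith : (0:ℝ) < P1 + 1)] :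
        0 < a * (1 - a * b) * (x * y) + (1 - b) * (P1 + 1) + a * (1 - b) * (x + y))]
end

section
/- Let 0 < a < 1, 0 < b < 1, P̂1 > 0 and P̂2 > 0. Then μ1(a,b,P̂1,P̂2) ≤ 1 if and only if P̂2 ≥ (1−b)/(ab), and μ1(a,b,P̂1,P̂2) < 1 if and only if P̂2 > (1−b)/(ab). -/
/-- For 0<a<1, 0<b<1, P̂₁>0 and P̂₂>0:
μ₁(a,b,P̂₁,P̂₂) ≤ 1 iff P̂₂ ≥ (1−b)/(ab), and μ₁(a,b,P̂₁,P̂₂) < 1 iff P̂₂ > (1−b)/(ab),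
where μ₁(a,b,P̂₁,P̂₂) = ((bP̂₁+1)(P̂₂ − b − abP̂₂ + 1))/(bP̂₂(P̂₁ + aP̂₂ + 1)). -/
theorem stmt6 (a b P1 P2 : ℝ) (ha : 0 < a) (ha1 : a < 1) (hb : 0 < b) (hb1 : b < 1)
    (hP1 : 0 < P1) (hP2 : 0 < P2) :
    (((b * P1 + 1) * (P2 - b - a * b * P2 + 1)) / (b * P2 * (P1 + a * P2 + 1)) ≤ 1 ↔
      P2 ≥ (1 - b) / (a * b)) ∧
    (((b * P1 + 1) * (P2 - b - a * b * P2 + 1)) / (b * P2 * (P1 + a * P2 + 1)) < 1 ↔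
      P2 > (1 - b) / (a * b)) := by
  have hD : 0 < b * P2 * (P1 + a * P2 + 1) := by positivity
  have hab : 0 < a * b := by positivity
  constructor
  · rw [div_le_one hD, ge_iff_le, div_le_iff₀ hab]
    constructor <;> intro h <;> nlinarith [mul_pos hb hP1]
  · rw [div_lt_one hD, gt_iff_lt, div_lt_iff₀ hab]
    constructor <;> intro h <;> nlinarith [mul_pos hb hP1]
end

section
/- Let 0 < a < 1, 0 < b < 1, P̂1 > 0 and P̂2 > 0. Then μ2(a,b,P̂1,P̂2) ≤ 1 if and only if P̂1 ≥ (1−a)/(ab), and μ2(a,b,P̂1,P̂2) < 1 if and only if P̂1 > (1−a)/(ab). -/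
/-- For 0<a<1, 0<b<1, P̂₁>0 and P̂₂>0:
μ₂(a,b,P̂₁,P̂₂) ≤ 1 iff P̂₁ ≥ (1−a)/(ab), and μ₂(a,b,P̂₁,P̂₂) < 1 iff P̂₁ > (1−a)/(ab),
where μ₂(a,b,P̂₁,P̂₂) = ((aP̂₂+1)(P̂₁ − a − abP̂₁ + 1))/(aP̂₁(P̂₂ + bP̂₁ + 1)). -/
theorem stmt7 (a b P1 P2 : ℝ) (ha : 0 < a) (ha1 : a < 1) (hb : 0 < b) (hb1 : b < 1)
    (hP1 : 0 < P1) (hP2 : 0 < P2) :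
    (((a * P2 + 1) * (P1 - a - a * b * P1 + 1)) / (a * P1 * (P2 + b * P1 + 1)) ≤ 1 ↔
      P1 ≥ (1 - a) / (a * b)) ∧
    (((a * P2 + 1) * (P1 - a - a * b * P1 + 1)) / (a * P1 * (P2 + b * P1 + 1)) < 1 ↔
      P1 > (1 - a) / (a * b)) := by
  have hD : 0 < a * P1 * (P2 + b * P1 + 1) := by positivity
  have hab : 0 < a * b := mul_pos ha hb
  have hS : 0 < a * P2 + 1 + P1 := by positivity
  constructor
  · rw [div_le_one hD, ge_iff_le, div_le_iff₀ hab]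
    constructor <;> intro h <;> nlinarith [mul_pos hS hab, sq_nonneg P1]
  · rw [div_lt_one hD, gt_iff_lt, div_lt_iff₀ hab]
    constructor <;> intro h <;> nlinarith [mul_pos hS hab, sq_nonneg P1]
end

section
/- Let 0 < a < 1, 0 < b < 1, P1 > 0, P2 > 0, ρ ∈ (0,1] and θ ∈ [0,1]. Set σ1² := (1−ρ)P1 + a(1−θ)P2 + 1 and σ2² := b(1−ρ)P1 + (1−θ)P2 + 1. Then (1/2)·log(1 + bρP1/σ2²) > (1/2)·log(1 + ρP1/(aθP2 + σ1²)) if and only if P2·(θ + ab − 1) > 1 − b; that is, R⁺1(2) > R⁻1(1) exactly when P2 > (1−b)/(θ+ab−1) (with θ+ab−1 > 0). -/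
/-- R⁺₁(2) > R⁻₁(1) if and only if P₂(θ + ab − 1) > 1 − b. -/
theorem stmt11 (a b P1 P2 ρ θ σ1sq σ2sq : ℝ)
    (ha : 0 < a) (ha1 : a < 1) (hb : 0 < b) (hb1 : b < 1)
    (hP1 : 0 < P1) (hP2 : 0 < P2)
    (hρ : ρ ∈ Set.Ioc (0 : ℝ) 1) (hθ : θ ∈ Set.Icc (0 : ℝ) 1)
    (hσ1 : σ1sq = (1 - ρ) * P1 + a * (1 - θ) * P2 + 1)
    (hσ2 : σ2sq = b * (1 - ρ) * P1 + (1 - θ) * P2 + 1) :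
    (1 / 2) * Real.log (1 + b * ρ * P1 / σ2sq) >
        (1 / 2) * Real.log (1 + ρ * P1 / (a * θ * P2 + σ1sq)) ↔
      P2 * (θ + a * b - 1) > 1 - b := by
  obtain ⟨hρ0, hρ1⟩ := hρ
  obtain ⟨hθ0, hθ1⟩ := hθ
  subst hσ1 hσ2
  have hσ1pos : 0 < (1 - ρ) * P1 + a * (1 - θ) * P2 + 1 := by
    nlinarith [mul_nonneg (sub_nonneg.2 hρ1) hP1.le,
      mul_nonneg (mul_nonneg ha.le (sub_nonneg.2 hθ1)) hP2.le]
  have hσ2pos : 0 < b * (1 - ρ) * P1 + (1 - θ) * P2 + 1 := by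
    nlinarith [mul_nonneg (mul_nonneg hb.le (sub_nonneg.2 hρ1)) hP1.le,
      mul_nonneg (sub_nonneg.2 hθ1) hP2.le]
  have hD1 : 0 < a * θ * P2 + ((1 - ρ) * P1 + a * (1 - θ) * P2 + 1) := by
    nlinarith [mul_nonneg (mul_nonneg ha.le hθ0) hP2.le]
  have h1 : 0 < 1 + ρ * P1 / (a * θ * P2 + ((1 - ρ) * P1 + a * (1 - θ) * P2 + 1)) := by
    positivity
  rw [gt_iff_lt, mul_lt_mul_iff_right₀ (by norm_num : (0:ℝ) < 1/2),
      Real.log_lt_log_iff h1, add_lt_add_iff_left, div_lt_div_iff₀ hD1 hσ2pos]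
  · constructor <;> intro h <;> nlinarith [mul_pos hρ0 hP1]
  · positivity
end

section
/- Let 0 < a < 1, 0 < b < 1, P2 > 0, set T1 := (1−a)/(ab), and let θ ∈ [0,1]. Then (1 + T1/(a(1−θ)P2 + 1)) · (1 + (1−θ)P2/(b·T1 + 1)) · (1 + aθP2/(T1 + a(1−θ)P2 + 1)) = 1 + T1 + a·P2, independently of θ. In particular, when the power budget of user 1 equals T1, the sum-rate obtained by splitting the power of user 2 into a public part θP2 and a private part (1−θ)P2 is constant in θ, so the lower part of the boundary coincides with the sum-rate front. -/
/-- When the power budget of user 1 equals T₁ = (1−a)/(ab), and user 2 splits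
its power P₂ into public part θP₂ and private part (1−θ)P₂, the product of the
three SNR factors determining the sum-rate is constant in θ, equal to
1 + T₁ + aP₂. -/
theorem stmt16 (a b P2 T1 θ : ℝ) (ha : 0 < a) (ha1 : a < 1) (hb : 0 < b) (hb1 : b < 1)
    (hP2 : 0 < P2) (hT1 : T1 = (1 - a) / (a * b)) (hθ : θ ∈ Set.Icc (0 : ℝ) 1) :
    (1 + T1 / (a * (1 - θ) * P2 + 1)) * (1 + (1 - θ) * P2 / (b * T1 + 1)) *
      (1 + a * θ * P2 / (T1 + a * (1 - θ) * P2 + 1)) = 1 + T1 + a * P2 := by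
  obtain ⟨h0, h1⟩ := hθ
  subst hT1
  have hab : (0:ℝ) < a * b := by positivity
  have h1a : (0:ℝ) ≤ 1 - a := by linarith
  have hT1nn : (0:ℝ) ≤ (1 - a) / (a * b) := div_nonneg h1a hab.le
  have hx : (0:ℝ) ≤ a * (1 - θ) * P2 :=
    mul_nonneg (mul_nonneg ha.le (by linarith)) hP2.le
  have hd1 : a * (1 - θ) * P2 + 1 ≠ 0 := by positivity
  have hd2 : b * ((1 - a) / (a * b)) + 1 ≠ 0 := by positivity
  have hd3 : (1 - a) / (a * b) + a * (1 - θ) * P2 + 1 ≠ 0 := by positivity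
  field_simp
  ring
end
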